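/- If P(q) = (q - α₁) * (q - α₂) * ⋯ * (q - αₙ) with α₁,…,αₙ ∈ ℍ, then α₁ is a zero of P, and every zero of P lies in [α₁] ∪ [α₂] ∪ ⋯ ∪ [αₙ], where [α] denotes the conjugacy class of α. -/

import Mathlib

open Quaternion Polynomial

/-- Evaluation of a quaternionic polynomial with coefficients written on the right. -/
noncomputable def qeval (P : Polynomial ℍ[ℝ]) (q : ℍ[ℝ]) : ℍ[ℝ] :=
  P.sum fun n a => q ^ n * a

/-- The conjugacy class (2-sphere) of a quaternion. -/
def conjClass (α : ℍ[ℝ]) : Set ℍ[ℝ] :=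
  {x | ∃ r : ℍ[ℝ], r ≠ 0 ∧ x = r⁻¹ * α * r}

/-!
Evaluation is not multiplicative, but it obeys the product rule
`(P * Q)(q) = P(q) * Q(P(q)⁻¹ q P(q))` whenever `P(q) ≠ 0`, and `(P * Q)(q) = 0` when `P(q) = 0`.
Hence `X - C α₁` being a left factor makes `α₁` a zero, and by induction on the number of
factors every zero of `∏ (X - C αᵢ)` is a conjugate of a zero `αᵢ` of some linear factor.
-/

lemma qeval_add (P Q : Polynomial ℍ[ℝ]) (q : ℍ[ℝ]) :
    qeval (P + Q) q = qeval P q + qeval Q q :=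
  sum_add_index P Q _ (fun _ => mul_zero _) fun _ _ _ => mul_add _ _ _

lemma qeval_monomial (n : ℕ) (a q : ℍ[ℝ]) : qeval (monomial n a) q = q ^ n * a :=
  sum_monomial_index a _ (mul_zero _)

lemma qeval_C (a q : ℍ[ℝ]) : qeval (C a) q = a := by
  simpa using qeval_monomial 0 a q

lemma qeval_X (q : ℍ[ℝ]) : qeval X q = q := by
  simpa [monomial_one_one_eq_X] using qeval_monomial 1 1 q

lemma qeval_one (q : ℍ[ℝ]) : qeval 1 q = 1 :=
  qeval_C 1 q

lemma qeval_X_sub_C (a q : ℍ[ℝ]) : qeval (X - C a) q = q - a := by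
  rw [sub_eq_add_neg, ← C_neg, qeval_add, qeval_X, qeval_C, sub_eq_add_neg]

lemma qeval_mul (P Q : Polynomial ℍ[ℝ]) (q : ℍ[ℝ]) :
    qeval (P * Q) q = Q.sum fun j b => q ^ j * qeval P q * b := by
  induction Q using Polynomial.induction_on' with
  | add Q₁ Q₂ h₁ h₂ =>
    rw [mul_add, qeval_add, h₁, h₂,
      sum_add_index Q₁ Q₂ _ (fun _ => mul_zero _) fun _ _ _ => mul_add _ _ _]
  | monomial j b =>
    rw [sum_monomial_index b _ (mul_zero _)]
    induction P using Polynomial.induction_on' with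
    | add P₁ P₂ h₁ h₂ => rw [add_mul, qeval_add, h₁, h₂, qeval_add, mul_add, add_mul]
    | monomial i a =>
      rw [monomial_mul_monomial, qeval_monomial, qeval_monomial, pow_add, pow_mul_comm]
      simp only [mul_assoc]

lemma qeval_mul_of_qeval_eq_zero {P : Polynomial ℍ[ℝ]} {q : ℍ[ℝ]} (h : qeval P q = 0)
    (Q : Polynomial ℍ[ℝ]) : qeval (P * Q) q = 0 := by
  simp [qeval_mul, h, Polynomial.sum_def]

lemma qeval_mul_of_qeval_ne_zero {P : Polynomial ℍ[ℝ]} {q : ℍ[ℝ]} (h : qeval P q ≠ 0)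
    (Q : Polynomial ℍ[ℝ]) :
    qeval (P * Q) q = qeval P q * qeval Q ((qeval P q)⁻¹ * q * qeval P q) := by
  rw [qeval_mul, qeval.eq_1 Q, Polynomial.sum_def, Polynomial.sum_def, Finset.mul_sum]
  refine Finset.sum_congr rfl fun n _ => ?_
  rw [GroupWithZero.conj_pow₀ h, ← mul_assoc, ← mul_assoc, ← mul_assoc, mul_inv_cancel₀ h,
    one_mul]

lemma mem_conjClass_iff_isConj {x α : ℍ[ℝ]} : x ∈ conjClass α ↔ IsConj α x := by
  rw [GroupWithZero.isConj_iff₀]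
  constructor
  · rintro ⟨r, hr, rfl⟩
    exact ⟨r⁻¹, inv_ne_zero hr, by rw [inv_inv]⟩
  · rintro ⟨c, hc, rfl⟩
    exact ⟨c⁻¹, inv_ne_zero hc, by rw [inv_inv]⟩

lemma isConj_of_qeval_prod_eq_zero (l : List ℍ[ℝ]) {q : ℍ[ℝ]}
    (hq : qeval (l.map fun α => X - C α).prod q = 0) : ∃ α ∈ l, IsConj α q := by
  induction l generalizing q with
  | nil => simp [qeval_one] at hq
  | cons a t ih =>
    rw [List.map_cons, List.prod_cons] at hq
    by_cases ha : qeval (X - C a) q = 0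
    · rw [qeval_X_sub_C, sub_eq_zero] at ha
      exact ⟨a, List.mem_cons_self, ha ▸ IsConj.refl a⟩
    · rw [qeval_mul_of_qeval_ne_zero ha, mul_eq_zero, or_iff_right ha] at hq
      obtain ⟨β, hβ, hconj⟩ := ih hq
      have hconj' : IsConj ((qeval (X - C a) q)⁻¹ * q * qeval (X - C a) q) q :=
        GroupWithZero.isConj_iff₀.2 ⟨_, ha, by simp [mul_assoc, ha]⟩
      exact ⟨β, List.mem_cons_of_mem a hβ, hconj.trans hconj'⟩

theorem gauss_lucas_stmt8 (l : List ℍ[ℝ]) (hl : l ≠ []) (P : Polynomial ℍ[ℝ])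
    (hP : P = (l.map fun α => X - C α).prod) :
    qeval P (l.head hl) = 0 ∧
      ∀ q : ℍ[ℝ], qeval P q = 0 → ∃ α ∈ l, q ∈ conjClass α := by
  subst hP
  refine ⟨?_, fun q hq => ?_⟩
  · obtain ⟨a, t, rfl⟩ := List.exists_cons_of_ne_nil hl
    rw [List.head_cons, List.map_cons, List.prod_cons]
    exact qeval_mul_of_qeval_eq_zero (by rw [qeval_X_sub_C, sub_self]) _
  · obtain ⟨α, hα, hconj⟩ := isConj_of_qeval_prod_eq_zero l hq
    exact ⟨α, hα, mem_conjClass_iff_isConj.2 hconj⟩
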